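/- Let i > k, let a ∈ T be a homogeneous element of degree j−1, let b ∈ T be homogeneous, and set u = a⊗(X_i⊗X_k − b_{ik} X_k⊗X_i − p_{ik})⊗b ∈ I_R. Then there exists a positive integer p such that (1 + σ_j)^p(u) = 0, where σ_j acts on the homogeneous component of T containing u. -/

import Mathlib

/- Setting (common to all statements):
`V` is the complex vector space with basis `X_1, …, X_N`, `T = T(V)` the tensor algebra,
realized concretely as the algebra of the free monoid of words in the letters `Fin N`;
the homogeneous component `T^n` is the span of the words of length `n`.
For `j < i` we are given nonzero scalars `b i j` and elements `p i j` in the span of the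
`X_k ⊗ X_l` with `k, l ≤ i - 1`; `I_R` is the two-sided ideal generated by the elements
`X_i ⊗ X_j − b_{ij} X_j ⊗ X_i − p_{ij}`, and `𝒜 = T/I_R`. -/

open scoped BigOperators

noncomputable section

namespace QDiff

/-- Words in the letters `X_1, …, X_N` (indexed by `Fin N`). -/
abbrev Word (N : ℕ) := FreeMonoid (Fin N)

/-- The tensor algebra `T(V)` over the `N`-dimensional space `V` with basis `X_1,…,X_N`,
realized concretely as the monoid algebra on words. -/
abbrev T (N : ℕ) := MonoidAlgebra ℂ (Word N)

variable {N : ℕ}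

/-- The basis vector `X_i` of `V ⊆ T(V)`. -/
def X (i : Fin N) : T N := MonoidAlgebra.single (FreeMonoid.of i) 1

/-- The monomial of `T(V)` associated to a word. -/
def mono (w : Word N) : T N := MonoidAlgebra.single w 1

/-- Length (tensor degree) of a word. -/
def wlen (w : Word N) : ℕ := (FreeMonoid.toList w).length

/-- `cnt w k`: the number of occurrences of the letter `X_k` in the word `w`;
so `fun k => cnt w k` is `ℓ(w)`. -/
def cnt (w : Word N) (k : Fin N) : ℕ := (FreeMonoid.toList w).count k

/-- `w' <_l w`: at the smallest index at which `ℓ(w')` and `ℓ(w)` differ,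
the entry of `ℓ(w')` is strictly greater than that of `ℓ(w)`. -/
def lexLt (w' w : Word N) : Prop :=
  ∃ k : Fin N, (∀ j : Fin N, j < k → cnt w' j = cnt w j) ∧ cnt w k < cnt w' k

/-- `w' ≤_l w`. -/
def lexLe (w' w : Word N) : Prop := (∀ k : Fin N, cnt w' k = cnt w k) ∨ lexLt w' w

/-- The homogeneous component `T^n` of the tensor algebra. -/
def Tdeg (N n : ℕ) : Submodule ℂ (T N) :=
  Submodule.span ℂ {x : T N | ∃ w : Word N, wlen w = n ∧ x = mono w}

variable (b : Fin N → Fin N → ℂ) (p : Fin N → Fin N → T N)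

/-- The scalars `b i j` (for `j < i`) are nonzero. -/
def GoodB : Prop := ∀ i j : Fin N, j < i → b i j ≠ 0

/-- Each `p i j` (for `j < i`) lies in the span of the monomials `X_k ⊗ X_l`
with `k, l ≤ i - 1`. -/
def GoodP : Prop := ∀ i j : Fin N, j < i →
  p i j ∈ Submodule.span ℂ {x : T N | ∃ k l : Fin N, k < i ∧ l < i ∧ x = X k * X l}

/-- The generator `X_i ⊗ X_j − b_{ij} X_j ⊗ X_i − p_{ij}` of the ideal of relations. -/
def relGen (i j : Fin N) : T N := X i * X j - b i j • (X j * X i) - p i j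

/-- The two-sided ideal `I_R` of relations (as a `ℂ`-submodule it is the span of the
elements `a ⬝ relGen i j ⬝ c`). -/
def IR : Submodule ℂ (T N) :=
  Submodule.span ℂ
    {x : T N | ∃ (i j : Fin N) (a c : T N), j < i ∧ x = a * relGen b p i j * c}

/-- Condition (EA): every `u ∈ I_R` lies in the span of the elements
`a ⊗ (X_i ⊗ X_j − b_{ij} X_j ⊗ X_i − p_{ij}) ⊗ c`, where `j < i` and `a, c` are monomials
of `T` such that the monomial `a ⊗ X_i ⊗ X_j ⊗ c` is `≤_l` every monomial occurring in `u`. -/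
def EA : Prop :=
  ∀ u ∈ IR b p, u ∈ Submodule.span ℂ
    {x : T N | ∃ (i j : Fin N) (a c : Word N), j < i ∧
      x = mono a * relGen b p i j * mono c ∧
      ∀ w ∈ u.coeff.support,
        lexLe (a * (FreeMonoid.of i * FreeMonoid.of j) * c) w}

/-- The map `S : V ⊗ V → V ⊗ V` on pairs of basis vectors. -/
def Sact (x y : Fin N) : T N :=
  if y < x then b x y • (X y * X x) + p x y
  else if x < y then (b y x)⁻¹ • (X y * X x - p y x)
  else X x * X y

/-- The map `S̄ : V ⊗ V → V ⊗ V` on pairs of basis vectors. -/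
def SbarAct (x y : Fin N) : T N :=
  if y < x then b x y • (X y * X x)
  else if x < y then (b y x)⁻¹ • (X y * X x)
  else X x * X y

/-- Extend a function on words to a linear endomorphism of `T(V)`. -/
def liftWord (f : Word N → T N) : T N →ₗ[ℂ] T N :=
  Finsupp.lsum ℂ (fun w => LinearMap.toSpanSingleton ℂ (T N) (f w)) ∘ₗ
    (MonoidAlgebra.coeffLinearEquiv ℂ).toLinearMap

/-- The action of the paper's `σ_{k+1}` (acting on the tensor factors in 0-indexed
positions `k, k+1`) on a word; identity on words that are too short. -/
def sigmaWord (k : ℕ) (w : Word N) : T N :=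
  if h : k + 2 ≤ (FreeMonoid.toList w).length then
    mono (FreeMonoid.ofList ((FreeMonoid.toList w).take k)) *
      Sact b p ((FreeMonoid.toList w).get ⟨k, by omega⟩)
        ((FreeMonoid.toList w).get ⟨k + 1, by omega⟩) *
      mono (FreeMonoid.ofList ((FreeMonoid.toList w).drop (k + 2)))
  else mono w

/-- The paper's operator `σ_{k+1}`: it acts as `S` on the tensor factors in 0-indexed
positions `k, k+1` and as the identity on all other factors. -/
def sigma (k : ℕ) : T N →ₗ[ℂ] T N := liftWord (sigmaWord b p k)

/-- The action of the paper's `σ̄_{k+1}` on a word. -/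
def sigmabarWord (k : ℕ) (w : Word N) : T N :=
  if h : k + 2 ≤ (FreeMonoid.toList w).length then
    mono (FreeMonoid.ofList ((FreeMonoid.toList w).take k)) *
      SbarAct b ((FreeMonoid.toList w).get ⟨k, by omega⟩)
        ((FreeMonoid.toList w).get ⟨k + 1, by omega⟩) *
      mono (FreeMonoid.ofList ((FreeMonoid.toList w).drop (k + 2)))
  else mono w

/-- The paper's operator `σ̄_{k+1}`: it acts as `S̄` on the tensor factors in 0-indexed
positions `k, k+1` and as the identity on all other factors. -/
def sigmabar (k : ℕ) : T N →ₗ[ℂ] T N := liftWord (sigmabarWord b k)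

/-- The scalar by which `S̄` twists the (ordered) pair `(x, y)`. -/
def betaC (x y : Fin N) : ℂ := if y < x then b x y else if x < y then (b y x)⁻¹ else 1

/-- The coefficient of the quasi-permutation action of `σ ∈ S_n` on the word
`X_{f 0} ⊗ ⋯ ⊗ X_{f (n-1)}`: the product of `β` over the inversions of `σ`. -/
def permCoeff {n : ℕ} (σ : Equiv.Perm (Fin n)) (f : Fin n → Fin N) : ℂ :=
  ∏ q ∈ Finset.univ.filter (fun q : Fin n × Fin n => q.1 < q.2 ∧ σ q.2 < σ q.1),
    betaC b (f q.1) (f q.2)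

/-- The quasi-permutation action of `σ ∈ S_n` on a word
(identity on words of length `≠ n`). -/
def permWordFun {n : ℕ} (σ : Equiv.Perm (Fin n)) (w : Word N) : T N :=
  if h : (FreeMonoid.toList w).length = n then
    permCoeff b σ (fun j => (FreeMonoid.toList w).get (Fin.cast h.symm j)) •
      mono (FreeMonoid.ofList
        (List.ofFn fun j => (FreeMonoid.toList w).get (Fin.cast h.symm (σ⁻¹ j))))
  else mono w

/-- The operator `σ̄` on `T^n` for an arbitrary permutation `σ ∈ S_n`
(the quasi-permutation representation). -/
def sigmabarPerm {n : ℕ} (σ : Equiv.Perm (Fin n)) : T N →ₗ[ℂ] T N :=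
  liftWord (permWordFun b σ)

/-- The quasi-symmetrization operator `P_quasisym = (1/n!) ∑_{σ ∈ S_n} σ̄` on `T^n`. -/
def Pquasisym (n : ℕ) : T N →ₗ[ℂ] T N :=
  (n.factorial : ℂ)⁻¹ • ∑ σ : Equiv.Perm (Fin n), sigmabarPerm b σ

/-- The adjacent transposition `s_{k+1} = (k, k+1)` (0-indexed) in `S_n`. -/
def swapAdj (n : ℕ) (k : {k : ℕ // k + 2 ≤ n}) : Equiv.Perm (Fin n) :=
  Equiv.swap ⟨k.1, by omega⟩ ⟨k.1 + 1, by omega⟩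

/-- A choice, for each `σ ∈ S_n`, of a list of adjacent transpositions. -/
def DecompChoice (n : ℕ) := Equiv.Perm (Fin n) → List {k : ℕ // k + 2 ≤ n}

/-- The chosen lists really are decompositions: `σ = s_{i_1} ⋯ s_{i_r}`. -/
def ValidDecomp {n : ℕ} (D : DecompChoice n) : Prop :=
  ∀ σ : Equiv.Perm (Fin n), ((D σ).map (swapAdj n)).prod = σ

/-- `σ̂ = σ_{i_1} ⋯ σ_{i_r}` for the chosen decomposition `σ = s_{i_1} ⋯ s_{i_r}`. -/
def Phat {n : ℕ} (D : DecompChoice n) (σ : Equiv.Perm (Fin n)) : Module.End ℂ (T N) :=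
  ((D σ).map (fun k => (sigma b p k.1 : Module.End ℂ (T N)))).prod

/-- `P = (1/n!) ∑_{σ ∈ S_n} σ̂` (depending on the chosen decompositions `D`). -/
def POp {n : ℕ} (D : DecompChoice n) : Module.End ℂ (T N) :=
  (n.factorial : ℂ)⁻¹ • ∑ σ : Equiv.Perm (Fin n), Phat b p D σ

/-- `Q` is the operator `𝒫_qsym = lim_{M → ∞} P^M`: on each `T^n` and for every choice
of decompositions, the sequence `P^M u` is eventually equal to `Q u`. -/
def IsPqsym (Q : T N →ₗ[ℂ] T N) : Prop :=
  ∀ (n : ℕ) (D : DecompChoice n), ValidDecomp D →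
    ∀ u ∈ Tdeg N n, ∃ N₀ : ℕ, ∀ M ≥ N₀, ((POp b p D) ^ M) u = Q u

/-- The operator `I_r ⊗ Q^k ⊗ I_s` on `T^{r+k+s}`: on a word, apply `Q` to the middle
`k` tensor factors and the identity to the outer factors. -/
def middleMap (Q : T N →ₗ[ℂ] T N) (r k : ℕ) : T N →ₗ[ℂ] T N :=
  liftWord (fun w =>
    mono (FreeMonoid.ofList ((FreeMonoid.toList w).take r)) *
      Q (mono (FreeMonoid.ofList (((FreeMonoid.toList w).drop r).take k))) *
      mono (FreeMonoid.ofList ((FreeMonoid.toList w).drop (r + k))))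

/-- The pairing between `T(V^*)` (realized via the dual basis, hence again as the span
of words) and `T(V)`: a dual-basis word pairs to `1` with the corresponding word of the
same degree, and to `0` with all other words. -/
def pairT (w z : T N) : ℂ :=
  Finsupp.sum w.coeff (fun a c => c * z.coeff a)

/-- The quotient relation defining the quadratic algebra `𝒜 = T/I_R = RingQuot (Rel b p)`. -/
inductive Rel (b : Fin N → Fin N → ℂ) (p : Fin N → Fin N → T N) : T N → T N → Prop
  | mk (i j : Fin N) (h : j < i) : Rel b p (X i * X j) (b i j • (X j * X i) + p i j)

/-- The ordered monomial `X_1^{a_1} ⊗ X_2^{a_2} ⊗ ⋯ ⊗ X_N^{a_N}`. -/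
def ordMono (a : Fin N → ℕ) : T N := ((List.finRange N).map (fun i => X i ^ a i)).prod

/-! Write `r_{ik}` for the relation generator. On `a ⊗ z ⊗ c` with `a` of degree `m` and `z`
quadratic, `σ_{m+1}` only sees `z`, on which it acts as `S`; so it suffices to show
`(1 + S)^{i+1} r_{ik} = 0`. Since `S` inverts the relation, `(1 + S) r_{ik} = (1 - S) p_{ik}`, and
`(1 - S)(X_k ⊗ X_l)` is zero or a multiple of a relation generator with leading index
`max k l`. As `p_{ik}` involves only letters below `i`, induction on `i` concludes. -/

lemma liftWord_single (f : Word N → T N) (w : Word N) (c : ℂ) :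
    liftWord f (MonoidAlgebra.single w c) = c • f w := by
  rw [liftWord, LinearMap.comp_apply]
  erw [Finsupp.lsum_single]
  rfl

lemma mono_mul_mono (w w' : Word N) : mono w * mono w' = mono (w * w') := by
  simp [mono, MonoidAlgebra.single_mul_single]

lemma X_eq_mono (x : Fin N) : X x = mono (FreeMonoid.of x) := rfl

lemma sigma_mono_ofList_mul_X_mul_X_mul_mono (l : List (Fin N)) (x y : Fin N) (w : Word N) :
    sigma b p l.length (mono (FreeMonoid.ofList l) * (X x * X y) * mono w) =
      mono (FreeMonoid.ofList l) * Sact b p x y * mono w := by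
  have hword : mono (FreeMonoid.ofList l) * (X x * X y) * mono w =
      mono (FreeMonoid.ofList (l ++ x :: y :: FreeMonoid.toList w)) := by
    rw [X_eq_mono, X_eq_mono, mono_mul_mono, mono_mul_mono, mono_mul_mono]
    congr 1
    apply FreeMonoid.toList.injective
    simp
  rw [hword, sigma, mono, liftWord_single, one_smul, sigmaWord]
  simp only [FreeMonoid.toList_ofList]
  erw [dif_pos (by simp only [List.length_append, List.length_cons]; omega)]
  rw [List.get_eq_getElem, List.getElem_append_right (Nat.le_refl _),
    List.get_eq_getElem, List.getElem_append_right (Nat.le_add_right _ 1),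
    List.take_left, List.drop_append]
  simp [List.drop_eq_nil_of_le (by omega : l.length ≤ l.length + 2)]

lemma sigma_zero_X_mul_X (x y : Fin N) : sigma b p 0 (X x * X y) = Sact b p x y := by
  have h := sigma_mono_ofList_mul_X_mul_X_mul_mono b p [] x y 1
  rwa [show mono (FreeMonoid.ofList []) = (1 : T N) from rfl, show mono 1 = (1 : T N) from rfl,
    one_mul, mul_one, one_mul, mul_one] at h

def quadSpan : Submodule ℂ (T N) :=
  Submodule.span ℂ {z : T N | ∃ k l : Fin N, z = X k * X l}

lemma X_mul_X_mem_quadSpan (k l : Fin N) : X k * X l ∈ quadSpan (N := N) :=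
  Submodule.subset_span ⟨k, l, rfl⟩

lemma p_mem_quadSpan (hp : GoodP p) {i k : Fin N} (hk : k < i) : p i k ∈ quadSpan := by
  refine Submodule.span_mono ?_ (hp i k hk)
  rintro _ ⟨k', l', -, -, rfl⟩
  exact ⟨k', l', rfl⟩

lemma relGen_mem_quadSpan (hp : GoodP p) {i k : Fin N} (hk : k < i) :
    relGen b p i k ∈ quadSpan :=
  sub_mem (sub_mem (X_mul_X_mem_quadSpan _ _) (Submodule.smul_mem _ _ (X_mul_X_mem_quadSpan _ _)))
    (p_mem_quadSpan p hp hk)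

lemma Sact_mem_quadSpan (hp : GoodP p) (x y : Fin N) : Sact b p x y ∈ quadSpan := by
  rw [Sact]
  rcases lt_trichotomy x y with h | rfl | h
  · rw [if_neg h.not_gt, if_pos h]
    exact Submodule.smul_mem _ _ (sub_mem (X_mul_X_mem_quadSpan _ _) (p_mem_quadSpan p hp h))
  · simp only [lt_irrefl, if_false]
    exact X_mul_X_mem_quadSpan _ _
  · rw [if_pos h]
    exact add_mem (Submodule.smul_mem _ _ (X_mul_X_mem_quadSpan _ _)) (p_mem_quadSpan p hp h)

lemma sigma_zero_mem_quadSpan (hp : GoodP p) {z : T N} (hz : z ∈ quadSpan) :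
    sigma b p 0 z ∈ quadSpan := by
  induction hz using Submodule.span_induction with
  | mem x hx =>
    obtain ⟨k, l, rfl⟩ := hx
    rw [sigma_zero_X_mul_X]
    exact Sact_mem_quadSpan b p hp k l
  | zero => simp
  | add u v _ _ hu hv => rw [map_add]; exact add_mem hu hv
  | smul r u _ hu => rw [map_smul]; exact Submodule.smul_mem _ _ hu

lemma sigma_mono_mul_X_mul_X_mul {m : ℕ} {w : Word N} (hw : wlen w = m) (x y : Fin N)
    (c : T N) :
    sigma b p m (mono w * (X x * X y) * c) = mono w * Sact b p x y * c := by
  induction c using MonoidAlgebra.induction_linear with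
  | zero => simp
  | add f g hf hg => rw [mul_add, mul_add, map_add, hf, hg]
  | single w' r =>
    have hsingle : (MonoidAlgebra.single w' r : T N) = r • mono w' := by simp [mono]
    rw [hsingle, mul_smul_comm, map_smul, mul_smul_comm, ← hw, wlen]
    exact congrArg (r • ·) (sigma_mono_ofList_mul_X_mul_X_mul_mono b p w.toList x y w')

lemma sigma_mul_mul {m : ℕ} {a z : T N} (ha : a ∈ Tdeg N m) (hz : z ∈ quadSpan) (c : T N) :
    sigma b p m (a * z * c) = a * sigma b p 0 z * c := by
  induction ha using Submodule.span_induction with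
  | mem a ha =>
    obtain ⟨w, hw, rfl⟩ := ha
    induction hz using Submodule.span_induction with
    | mem z hz =>
      obtain ⟨x, y, rfl⟩ := hz
      rw [sigma_zero_X_mul_X, sigma_mono_mul_X_mul_X_mul b p hw]
    | zero => simp
    | add u v _ _ hu hv => simp only [mul_add, add_mul, map_add, hu, hv]
    | smul r u _ hu => simp only [mul_smul_comm, smul_mul_assoc, map_smul, hu]
  | zero => simp
  | add u v _ _ hu hv => simp only [add_mul, map_add, hu, hv]
  | smul r u _ hu => simp only [smul_mul_assoc, map_smul, hu]

lemma one_add_sigma_pow_mul_mul (hp : GoodP p) (m r : ℕ) {a z : T N} (ha : a ∈ Tdeg N m)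
    (hz : z ∈ quadSpan) (c : T N) :
    ((1 + sigma b p m) ^ r) (a * z * c) = a * ((1 + sigma b p 0) ^ r) z * c := by
  induction r generalizing z with
  | zero => simp
  | succ r ih =>
    have hstep : (1 + sigma b p m) (a * z * c) = a * (1 + sigma b p 0) z * c := by
      simp only [LinearMap.add_apply, Module.End.one_apply, sigma_mul_mul b p ha hz, mul_add,
        add_mul]
    have hz' : (1 + sigma b p 0) z ∈ quadSpan := add_mem hz (sigma_zero_mem_quadSpan b p hp hz)
    rw [pow_succ, Module.End.mul_apply, hstep, ih hz', pow_succ, Module.End.mul_apply]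

lemma one_add_sigma_zero_relGen (hb : GoodB b) {i k : Fin N} (hk : k < i) :
    (1 + sigma b p 0) (relGen b p i k) = (1 - sigma b p 0) (p i k) := by
  simp only [LinearMap.add_apply, LinearMap.sub_apply, Module.End.one_apply, relGen, map_sub,
    map_smul, sigma_zero_X_mul_X, Sact, if_pos hk, if_neg hk.not_gt]
  rw [smul_add, smul_sub, smul_sub, smul_smul, smul_smul, mul_inv_cancel₀ (hb i k hk), one_smul,
    one_smul]
  abel

def relSpanBelow (i : Fin N) : Submodule ℂ (T N) :=
  Submodule.span ℂ {z : T N | ∃ j l : Fin N, l < j ∧ j < i ∧ z = relGen b p j l}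

lemma one_sub_sigma_zero_X_mul_X_mem (hb : GoodB b) {i x y : Fin N} (hx : x < i) (hy : y < i) :
    (1 - sigma b p 0) (X x * X y) ∈ relSpanBelow b p i := by
  have hrel : ∀ j l : Fin N, l < j → j < i → relGen b p j l ∈ relSpanBelow b p i :=
    fun j l hlj hji => Submodule.subset_span ⟨j, l, hlj, hji, rfl⟩
  simp only [LinearMap.sub_apply, Module.End.one_apply, sigma_zero_X_mul_X, Sact]
  rcases lt_trichotomy x y with h | rfl | h
  · have heq : X x * X y - (b y x)⁻¹ • (X y * X x - p y x) = -((b y x)⁻¹ • relGen b p y x) := by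
      rw [relGen, smul_sub, smul_sub, smul_sub, smul_smul, inv_mul_cancel₀ (hb y x h), one_smul]
      abel
    rw [if_neg h.not_gt, if_pos h, heq]
    exact neg_mem (Submodule.smul_mem _ _ (hrel y x h hy))
  · simp
  · have heq : X x * X y - (b x y • (X y * X x) + p x y) = relGen b p x y := by
      rw [relGen]
      abel
    rw [if_pos h, heq]
    exact hrel x y h hx

lemma one_sub_sigma_zero_p_mem (hb : GoodB b) (hp : GoodP p) {i k : Fin N} (hk : k < i) :
    (1 - sigma b p 0) (p i k) ∈ relSpanBelow b p i := by
  refine (Submodule.span_le (p := (relSpanBelow b p i).comap (1 - sigma b p 0))).2 ?_ (hp i k hk)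
  rintro _ ⟨x, y, hx, hy, rfl⟩
  exact one_sub_sigma_zero_X_mul_X_mem b p hb hx hy

lemma one_add_sigma_zero_pow_relGen (hb : GoodB b) (hp : GoodP p) (n : ℕ) :
    ∀ i k : Fin N, k < i → (i : ℕ) < n → ((1 + sigma b p 0) ^ n) (relGen b p i k) = 0 := by
  induction n with
  | zero => intro i k _ hi; omega
  | succ n ih =>
    intro i k hk hi
    have hker : relSpanBelow b p i ≤ LinearMap.ker ((1 + sigma b p 0) ^ n) := by
      rw [relSpanBelow, Submodule.span_le]
      rintro _ ⟨j, l, hlj, hji, rfl⟩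
      exact ih j l hlj (by rw [Fin.lt_def] at hji; omega)
    rw [pow_succ, Module.End.mul_apply, one_add_sigma_zero_relGen b p hb hk]
    exact hker (one_sub_sigma_zero_p_mem b p hb hp hk)

/-- for `i > k`, `a` homogeneous of degree `j−1` (here `j−1 = m`) and `c`
homogeneous, and `u = a ⊗ (X_i ⊗ X_k − b_{ik} X_k ⊗ X_i − p_{ik}) ⊗ c ∈ I_R`, there is a
positive integer `pw` with `(1 + σ_j)^{pw} u = 0` (here `σ_j = sigma m`, acting on the
0-indexed positions `m, m+1`). -/
theorem statement8 {N : ℕ} (b : Fin N → Fin N → ℂ) (p : Fin N → Fin N → T N)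
    (hb : GoodB b) (hp : GoodP p) :
    ∀ (i k : Fin N), k < i → ∀ (m m' : ℕ) (a c : T N),
      a ∈ Tdeg N m → c ∈ Tdeg N m' →
      ∃ pw : ℕ, 0 < pw ∧
        (((1 : Module.End ℂ (T N)) + sigma b p m) ^ pw) (a * relGen b p i k * c) = 0 := by
  intro i k hk m m' a c ha _
  refine ⟨i + 1, Nat.succ_pos _, ?_⟩
  rw [one_add_sigma_pow_mul_mul b p hp m _ ha (relGen_mem_quadSpan b p hp hk),
    one_add_sigma_zero_pow_relGen b p hb hp _ i k hk (Nat.lt_succ_self _), mul_zero, zero_mul]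

end QDiff
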